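/- Let k be a number field of degree d, S a finite set of places containing the archimedean ones with |S| = r+1, and let α_1,...,α_q (1 ≤ q ≤ r) be multiplicatively independent S-units with logarithmic embeddings α_j = (d_v log‖α_j‖_v)_{v∈S} ∈ R^{r+1}. Then ‖α_1 ∧ α_2 ∧ ⋯ ∧ α_q‖_1 ≤ 2^{−q} C(q,r) Π_{j=1}^q ‖α_j‖_1, where C(q,r) = min{2^q, ((r+1)/(r+1−q))^{r+1−q}}. Equivalently, ‖α_1 ∧ ⋯ ∧ α_q‖_1 ≤ C(q,r) Π_j ([k:Q] h(α_j)). -/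

import Mathlib

open Finset in
/-- The Schinzel norm `δ(x) = max{Σ xₘ⁺, Σ xₙ⁻}` on `ℝ^N`. -/
noncomputable def schinzelDelta {N : ℕ} (x : Fin N → ℝ) : ℝ :=
  max (∑ m, max (x m) 0) (∑ n, max (-(x n)) 0)

/-- The set `E_N = {±e_m}` of signed standard basis vectors. -/
def schE (N : ℕ) : Set (Fin N → ℝ) :=
  {x | ∃ m, x = Pi.single m 1 ∨ x = -Pi.single m 1}

/-- The set `F_N = {e_m − e_n : m ≠ n}`. -/
def schF (N : ℕ) : Set (Fin N → ℝ) :=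
  {x | ∃ m n, m ≠ n ∧ x = Pi.single m 1 - Pi.single n 1}

open Finset in
/-- The `ℓ¹`-norm of the exterior product `x₁ ∧ ⋯ ∧ x_L`: the sum, over all
`L`-element subsets `I ⊆ {1,…,N}`, of the absolute values of the `L×L` minors
(rows indexed by `I`) of the `N×L` matrix with columns `x₁,…,x_L`. -/
noncomputable def wedgeL1 {N L : ℕ} (x : Fin L → Fin N → ℝ) : ℝ :=
  ∑ I : Finset (Fin N), if h : I.card = L then
    |(Matrix.of fun i j => x j ((I.orderIsoOfFin h i : Fin N))).det| else 0

/-!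
By the product formula the logarithmic embedding vectors lie on the hyperplane `∑ᵢ xᵢ = 0`.
Such an `x` is a nonnegative combination of edge vectors `eₘ - eₙ` of total weight `‖x‖₁ / 2`
(split `x⁺` over `x⁻` proportionally), so by multilinearity it suffices to bound
`‖w₁ ∧ ⋯ ∧ w_q‖₁` for edge vectors `wⱼ` in `ℝ^N`. Their matrix is totally unimodular, so every
`q × q` minor is `0` or `±1`. A minor with rows `I` is nonzero only if `Iᶜ` meets every connected
component of the graph with edges `wⱼ`; since `q` edges leave at least `N - q` components, `Iᶜ`
is then a transversal of exactly `N - q` components, and by AM-GM there are at most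
`(N / (N - q)) ^ (N - q)` transversals. Decomposing along the basis vectors `eₘ` instead gives the
bound with `2 ^ q`.
-/

open Finset

namespace Matrix

variable {m m' n n' R : Type*} [CommRing R]

theorem det_eq_zero_of_sum_col_eq_zero [Fintype n] [DecidableEq n] [Nonempty n]
    (A : Matrix n n R) (h : ∀ j, ∑ i, A i j = 0) : A.det = 0 := by
  obtain ⟨i⟩ := ‹Nonempty n›
  have := det_updateRow_sum A i fun _ => 1
  rw [one_smul] at this
  rw [← this, det_eq_zero_of_row_eq_zero i fun j => by
    simpa using (Finset.sum_apply (M := fun _ => R) j univ fun k => A k).trans (h j)]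

def HasIncidenceColumns (A : Matrix m n R) : Prop :=
  ∀ j, (∀ i, A i j = 0 ∨ A i j = 1 ∨ A i j = -1) ∧
    (∀ i i', A i j = 1 → A i' j = 1 → i = i') ∧ (∀ i i', A i j = -1 → A i' j = -1 → i = i')

theorem HasIncidenceColumns.submatrix {A : Matrix m n R} (hA : A.HasIncidenceColumns)
    {f : m' → m} (hf : f.Injective) (g : n' → n) : (A.submatrix f g).HasIncidenceColumns :=
  fun j => ⟨fun i => (hA (g j)).1 (f i),
    fun _ _ hi hi' => hf ((hA (g j)).2.1 _ _ hi hi'),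
    fun _ _ hi hi' => hf ((hA (g j)).2.2 _ _ hi hi')⟩

theorem HasIncidenceColumns.sum_col_eq_zero {A : Matrix m n R} [Fintype m]
    (hA : A.HasIncidenceColumns) {j : n} {i₁ i₂ : m} (h₁ : A i₁ j ≠ 0) (h₂ : A i₂ j ≠ 0)
    (hne : i₁ ≠ i₂) : ∑ i, A i j = 0 := by
  obtain ⟨hval, hone, hneg⟩ := hA j
  have hpm : ∀ i, A i j ≠ 0 → A i j = 1 ∨ A i j = -1 := fun i hi => (hval i).resolve_left hi
  -- the two nonzero entries are `1` and `-1`, so any third one would repeat one of them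
  rcases hpm i₁ h₁ with h₁ | h₁ <;> rcases hpm i₂ h₂ with h₂ | h₂
  · exact absurd (hone _ _ h₁ h₂) hne
  · rw [Fintype.sum_eq_add i₁ i₂ hne fun i ⟨hi₁, hi₂⟩ => by_contra fun hi =>
      (hpm i hi).elim (fun h => hi₁ (hone _ _ h h₁)) fun h => hi₂ (hneg _ _ h h₂), h₁, h₂,
      add_neg_cancel]
  · rw [Fintype.sum_eq_add i₁ i₂ hne fun i ⟨hi₁, hi₂⟩ => by_contra fun hi =>
      (hpm i hi).elim (fun h => hi₂ (hone _ _ h h₂)) fun h => hi₁ (hneg _ _ h h₁), h₁, h₂,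
      neg_add_cancel]
  · exact absurd (hneg _ _ h₁ h₂) hne

theorem HasIncidenceColumns.det_mem_range_signType_cast {k : ℕ} {A : Matrix (Fin k) (Fin k) R}
    (hA : A.HasIncidenceColumns) : A.det ∈ Set.range SignType.cast := by
  induction k with
  | zero => exact ⟨1, by simp⟩
  | succ k ih =>
    by_cases hsparse : ∃ j, ∀ i i', A i j ≠ 0 → A i' j ≠ 0 → i = i'
    · obtain ⟨j, hj⟩ := hsparse
      by_cases hzero : ∀ i, A i j = 0
      · exact ⟨0, by simp [det_eq_zero_of_column_eq_zero j hzero]⟩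
      push Not at hzero
      obtain ⟨i₀, hi₀⟩ := hzero
      rw [det_succ_column A j, sum_eq_single i₀ (fun i _ hi => by
        simp [show A i j = 0 from by_contra fun h => hi (hj _ _ h hi₀)]) (by simp)]
      change _ ∈ MonoidHom.mrange SignType.castHom.toMonoidHom
      have hneg_one : (-1 : R) ∈ MonoidHom.mrange SignType.castHom.toMonoidHom := ⟨-1, by simp⟩
      refine mul_mem (mul_mem (pow_mem hneg_one _) ?_)
        (ih (hA.submatrix Fin.succAbove_right_injective _))
      rcases ((hA j).1 i₀).resolve_left hi₀ with h | h
      · exact ⟨1, by simp [h]⟩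
      · exact ⟨-1, by simp [h]⟩
    · push Not at hsparse
      refine ⟨0, (det_eq_zero_of_sum_col_eq_zero A fun j => ?_).symm⟩
      obtain ⟨i₁, i₂, h₁, h₂, hne⟩ := hsparse j
      exact hA.sum_col_eq_zero h₁ h₂ hne

theorem HasIncidenceColumns.isTotallyUnimodular {A : Matrix m n R}
    (hA : A.HasIncidenceColumns) : A.IsTotallyUnimodular :=
  fun _ _ _ hf _ => (hA.submatrix hf _).det_mem_range_signType_cast

end Matrix

theorem Finset.card_le_prod_card_fiber_of_forall_transversal {α β : Type*} [Fintype α]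
    [DecidableEq α] [Fintype β] [DecidableEq β] (π : α → β) (s : Finset (Finset α))
    (hs : ∀ J ∈ s, #J ≤ Fintype.card β ∧ ∀ b, ∃ a ∈ J, π a = b) :
    #s ≤ ∏ b, #{a | π a = b} := by
  have hsub : s ⊆ univ.image fun g : (∀ b, {a // π a = b}) => univ.image fun b => (g b : α) := by
    intro J hJ
    obtain ⟨hcard, hmeet⟩ := hs J hJ
    choose g hgJ hgπ using hmeet
    refine mem_image.2 ⟨fun b => ⟨g b, hgπ b⟩, mem_univ _, ?_⟩
    refine eq_of_subset_of_card_le (image_subset_iff.2 fun b _ => hgJ b) ?_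
    rw [card_image_of_injective _ fun b b' h => by simpa [hgπ] using congrArg π h]
    simpa using hcard
  calc #s ≤ Fintype.card (∀ b, {a // π a = b}) := (card_le_card hsub).trans card_image_le
    _ = ∏ b, #{a | π a = b} := by simp [Fintype.card_pi, Fintype.card_subtype]

theorem Real.prod_le_arith_mean_pow {ι : Type*} (s : Finset ι) (z : ι → ℝ)
    (hz : ∀ i ∈ s, 0 ≤ z i) : ∏ i ∈ s, z i ≤ ((∑ i ∈ s, z i) / #s) ^ #s := by
  rcases s.eq_empty_or_nonempty with rfl | hs
  · simp
  have hn : (0 : ℝ) < #s := by exact_mod_cast hs.card_pos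
  have hamgm := Real.geom_mean_le_arith_mean_weighted s (fun _ => (#s : ℝ)⁻¹) z
    (fun _ _ => by positivity) (by simp [hn.ne']) hz
  calc ∏ i ∈ s, z i = (∏ i ∈ s, z i ^ (#s : ℝ)⁻¹) ^ #s := by
        rw [← prod_pow]
        refine prod_congr rfl fun i hi => ?_
        rw [← Real.rpow_natCast, ← Real.rpow_mul (hz i hi), inv_mul_cancel₀ hn.ne', Real.rpow_one]
    _ ≤ ((∑ i ∈ s, z i) / #s) ^ #s :=
        pow_le_pow_left₀ (prod_nonneg fun i hi => Real.rpow_nonneg (hz i hi) _)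
          (hamgm.trans_eq (by rw [← mul_sum, inv_mul_eq_div])) _

theorem Real.sum_mul_log_eq_zero_of_prod_pow_eq_one {ι : Type*} [Fintype ι] {a : ι → ℝ}
    (d : ι → ℕ) (ha : ∀ i, a i ≠ 0) (h : ∏ i, a i ^ d i = 1) :
    ∑ i, (d i : ℝ) * Real.log (a i) = 0 := by
  rw [← Real.log_one, ← h, Real.log_prod fun i _ => pow_ne_zero _ (ha i)]
  simp [Real.log_pow]

theorem Finset.sum_orderIsoOfFin {α M : Type*} [LinearOrder α] [AddCommMonoid M] {L : ℕ}
    {I : Finset α} (h : I.card = L) (f : α → M) :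
    ∑ i, f (I.orderIsoOfFin h i) = ∑ v ∈ I, f v := by
  rw [← sum_coe_sort I]
  exact (I.orderIsoOfFin h).toEquiv.sum_comp fun v => f v

section Wedge

variable {N L : ℕ}

noncomputable def wedgeMinor (x : Fin L → Fin N → ℝ) (I : Finset (Fin N)) : ℝ :=
  if h : I.card = L then (Matrix.of fun i j => x j (I.orderIsoOfFin h i : Fin N)).det else 0

theorem wedgeL1_eq_sum_abs_wedgeMinor (x : Fin L → Fin N → ℝ) :
    wedgeL1 x = ∑ I, |wedgeMinor x I| := by
  refine sum_congr rfl fun I _ => ?_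
  unfold wedgeMinor
  split_ifs <;> simp

theorem wedgeMinor_eq_zero_of_dotProduct_eq_zero {x : Fin L → Fin N → ℝ} {I : Finset (Fin N)}
    {u : Fin N → ℝ} (hu : u ≠ 0) (hsupp : ∀ v ∉ I, u v = 0) (horth : ∀ j, u ⬝ᵥ x j = 0) :
    wedgeMinor x I = 0 := by
  unfold wedgeMinor
  split_ifs with h
  · rw [← Matrix.exists_vecMul_eq_zero_iff]
    refine ⟨fun i => u (I.orderIsoOfFin h i), fun h0 => hu ?_, funext fun j => ?_⟩
    · ext v
      by_cases hv : v ∈ I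
      · simpa using congrFun h0 ((I.orderIsoOfFin h).symm ⟨v, hv⟩)
      · exact hsupp v hv
    · calc ∑ i, u (I.orderIsoOfFin h i) * x j (I.orderIsoOfFin h i)
          = ∑ v ∈ I, u v * x j v := Finset.sum_orderIsoOfFin h fun v => u v * x j v
        _ = u ⬝ᵥ x j := sum_subset (subset_univ I) fun v _ hv => by simp [hsupp v hv]
        _ = 0 := horth j
  · rfl

theorem wedgeMinor_sum_smul {T : Type*} [Fintype T] (w : T → Fin N → ℝ) (γ : Fin L → T → ℝ)
    (I : Finset (Fin N)) :
    wedgeMinor (fun j => ∑ t, γ j t • w t) I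
      = ∑ f : Fin L → T, (∏ j, γ j (f j)) * wedgeMinor (fun j => w (f j)) I := by
  unfold wedgeMinor
  split_ifs with h
  · set e := fun i => (I.orderIsoOfFin h i : Fin N)
    have hdet : ∀ y : Fin L → Fin N → ℝ,
        (Matrix.of fun i j => y j (e i)).det = Matrix.detRowAlternating fun j i => y j (e i) :=
      fun y => (Matrix.det_transpose _).symm
    have hrows :
        (fun j i => (∑ t, γ j t • w t) (e i)) = fun j => ∑ t, γ j t • fun i => w t (e i) := by
      ext j i
      simp [Finset.sum_apply]
    rw [hdet, hrows]
    refine (Matrix.detRowAlternating.toMultilinearMap.map_sum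
      fun j t => γ j t • fun i => w t (e i)).trans (sum_congr rfl fun f _ => ?_)
    rw [hdet]
    exact Matrix.detRowAlternating.map_smul_univ (fun j => γ j (f j)) fun j i => w (f j) (e i)
  · simp

theorem wedgeL1_sum_smul_le {T : Type*} [Fintype T] (w : T → Fin N → ℝ)
    (γ : Fin L → T → ℝ) {C : ℝ} (hw : ∀ f : Fin L → T, wedgeL1 (fun j => w (f j)) ≤ C) :
    wedgeL1 (fun j => ∑ t, γ j t • w t) ≤ C * ∏ j, ∑ t, |γ j t| := by
  calc wedgeL1 (fun j => ∑ t, γ j t • w t)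
      = ∑ I, |∑ f : Fin L → T, (∏ j, γ j (f j)) * wedgeMinor (fun j => w (f j)) I| := by
        simp only [wedgeL1_eq_sum_abs_wedgeMinor, wedgeMinor_sum_smul]
    _ ≤ ∑ I, ∑ f : Fin L → T, (∏ j, |γ j (f j)|) * |wedgeMinor (fun j => w (f j)) I| :=
        sum_le_sum fun I _ => (abs_sum_le_sum_abs _ _).trans_eq (by simp [abs_mul, abs_prod])
    _ = ∑ f : Fin L → T, (∏ j, |γ j (f j)|) * wedgeL1 (fun j => w (f j)) := by
        rw [sum_comm]
        simp [wedgeL1_eq_sum_abs_wedgeMinor, mul_sum]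
    _ ≤ ∑ f : Fin L → T, (∏ j, |γ j (f j)|) * C :=
        sum_le_sum fun f _ => mul_le_mul_of_nonneg_left (hw f) (by positivity)
    _ = C * ∏ j, ∑ t, |γ j t| := by
        rw [← sum_mul, mul_comm, prod_univ_sum, Fintype.piFinset_univ]

theorem wedgeL1_le_card_of_isTotallyUnimodular {x : Fin L → Fin N → ℝ}
    (hx : (Matrix.of fun v j => x j v).IsTotallyUnimodular) :
    wedgeL1 x ≤ #{I | wedgeMinor x I ≠ 0} := by
  have hle : ∀ I, |wedgeMinor x I| ≤ 1 := by
    intro I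
    unfold wedgeMinor
    split_ifs with h
    · obtain ⟨s, hs⟩ := hx L (fun i => I.orderIsoOfFin h i) id
        (fun _ _ hab => (I.orderIsoOfFin h).injective (Subtype.ext hab)) Function.injective_id
      change |((Matrix.of fun v j => x j v).submatrix _ id).det| ≤ 1
      rw [← hs]
      cases s <;> simp
    · simp
  rw [wedgeL1_eq_sum_abs_wedgeMinor, card_filter, Nat.cast_sum]
  refine sum_le_sum fun I _ => ?_
  split_ifs with h
  · simpa using hle I
  · simp [not_not.1 h]

theorem hasIncidenceColumns_single (m : Fin L → Fin N) :
    (Matrix.of fun v j => Pi.single (m j) (1 : ℝ) v).HasIncidenceColumns := by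
  intro j
  have hone : ∀ v, (Pi.single (m j) 1 : Fin N → ℝ) v = 1 → v = m j :=
    fun v hv => by_contra fun hne => by simp [hne] at hv
  refine ⟨fun v => ?_, fun v v' h h' => (hone v h).trans (hone v' h').symm, fun v _ h _ => ?_⟩
  · rcases eq_or_ne v (m j) with rfl | hv <;> simp [*]
  · by_cases hv : v = m j <;> norm_num [hv] at h

theorem wedgeL1_single_le_one (m : Fin L → Fin N) :
    wedgeL1 (fun j => Pi.single (m j) (1 : ℝ)) ≤ 1 := by
  refine (wedgeL1_le_card_of_isTotallyUnimodular
    (hasIncidenceColumns_single m).isTotallyUnimodular).trans ?_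
  suffices h : ∀ I, wedgeMinor (fun j => Pi.single (m j) (1 : ℝ)) I ≠ 0 → I = univ.image m by
    exact_mod_cast card_le_one.2 fun I hI J hJ => by
      simp only [mem_filter, mem_univ, true_and] at hI hJ
      rw [h I hI, h J hJ]
  intro I hI
  have hcard : I.card = L := by
    by_contra h
    exact hI (dif_neg h)
  refine eq_of_subset_of_card_le (fun v hv => ?_) ((card_image_le).trans (by simp [hcard]))
  by_contra hvm
  refine hI (wedgeMinor_eq_zero_of_dotProduct_eq_zero (u := Pi.single v 1) (by simp)
    (fun v' hv' => by simp [show v' ≠ v by rintro rfl; exact hv' hv])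
    fun j => ?_)
  simp only [mem_image, mem_univ, true_and, not_exists] at hvm
  simp [hvm j]

def edgeVec (t : Fin N × Fin N) : Fin N → ℝ := Pi.single t.1 1 - Pi.single t.2 1

theorem dotProduct_edgeVec (u : Fin N → ℝ) (t : Fin N × Fin N) :
    u ⬝ᵥ edgeVec t = u t.1 - u t.2 := by
  simp [edgeVec, dotProduct_sub]

theorem edgeVec_apply_eq_one {t : Fin N × Fin N} {v : Fin N} (h : edgeVec t v = 1) : v = t.1 :=
  by_contra fun hne => by
    simp only [edgeVec, Pi.sub_apply, Pi.single_apply, if_neg hne] at h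
    split_ifs at h <;> norm_num at h

theorem edgeVec_apply_eq_neg_one {t : Fin N × Fin N} {v : Fin N} (h : edgeVec t v = -1) :
    v = t.2 :=
  by_contra fun hne => by
    simp only [edgeVec, Pi.sub_apply, Pi.single_apply, if_neg hne] at h
    split_ifs at h <;> norm_num at h

theorem hasIncidenceColumns_edgeVec (p : Fin L → Fin N × Fin N) :
    (Matrix.of fun v j => edgeVec (p j) v).HasIncidenceColumns := fun j =>
  ⟨fun v => by
      simp only [Matrix.of_apply, edgeVec, Pi.sub_apply, Pi.single_apply]
      split_ifs <;> norm_num,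
    fun _ _ h h' => (edgeVec_apply_eq_one h).trans (edgeVec_apply_eq_one h').symm,
    fun _ _ h h' => (edgeVec_apply_eq_neg_one h).trans (edgeVec_apply_eq_neg_one h').symm⟩

/-- `Quot (EdgeRel p)` is the set of connected components of the graph on `Fin N` with edges
`p j`. -/
def EdgeRel (p : Fin L → Fin N × Fin N) (a b : Fin N) : Prop := ∃ j, p j = (a, b)

theorem le_add_card_quot_edgeRel (p : Fin L → Fin N × Fin N) :
    N ≤ L + Nat.card (Quot (EdgeRel p)) := by
  have := Fintype.ofFinite (Quot (EdgeRel p))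
  -- the kernel of `Φ` has dimension at least `N - L` and consists of functions of the component
  let Φ : (Fin N → ℝ) →ₗ[ℝ] (Fin L → ℝ) :=
    LinearMap.pi fun j =>
      LinearMap.proj (R := ℝ) (φ := fun _ : Fin N => ℝ) (p j).1 - LinearMap.proj (p j).2
  have hker : LinearMap.ker Φ ≤ LinearMap.range (LinearMap.funLeft ℝ ℝ (Quot.mk (EdgeRel p))) := by
    intro v hv
    have hv : ∀ j, v (p j).1 = v (p j).2 := fun j => sub_eq_zero.1 (congrFun hv j)
    exact ⟨Quot.lift v (by rintro a b ⟨j, hj⟩; simpa [hj] using hv j), rfl⟩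
  have hrange : Module.finrank ℝ (LinearMap.range Φ) ≤ L :=
    (Submodule.finrank_le _).trans (by simp)
  have hkernel : Module.finrank ℝ (LinearMap.ker Φ) ≤ Nat.card (Quot (EdgeRel p)) :=
    (Submodule.finrank_mono hker).trans ((LinearMap.finrank_range_le _).trans (by simp))
  have := Φ.finrank_range_add_finrank_ker
  simp only [Module.finrank_fintype_fun_eq_card, Fintype.card_fin] at this
  omega

theorem exists_notMem_mk_eq_of_wedgeMinor_ne_zero {p : Fin L → Fin N × Fin N}
    {I : Finset (Fin N)} (hI : wedgeMinor (fun j => edgeVec (p j)) I ≠ 0)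
    (c : Quot (EdgeRel p)) : ∃ v ∉ I, Quot.mk _ v = c := by
  classical
  by_contra! h
  obtain ⟨a, rfl⟩ := Quot.exists_rep c
  refine hI (wedgeMinor_eq_zero_of_dotProduct_eq_zero
    (u := fun v => if Quot.mk (EdgeRel p) v = Quot.mk _ a then 1 else 0)
    (fun h0 => by simpa using congrFun h0 a) (fun v hv => by simp [h v hv]) fun j => ?_)
  rw [dotProduct_edgeVec, Quot.sound ⟨j, rfl⟩, sub_self]

theorem wedgeL1_edgeVec_le (p : Fin L → Fin N × Fin N) :
    wedgeL1 (fun j => edgeVec (p j)) ≤ ((N : ℝ) / (N - L : ℕ)) ^ (N - L) := by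
  have := Fintype.ofFinite (Quot (EdgeRel p))
  have := Classical.decEq (Quot (EdgeRel p))
  set π := Quot.mk (EdgeRel p)
  refine (wedgeL1_le_card_of_isTotallyUnimodular
    (hasIncidenceColumns_edgeVec p).isTotallyUnimodular).trans ?_
  set G : Finset (Finset (Fin N)) := {I | wedgeMinor (fun j => edgeVec (p j)) I ≠ 0}
  have hcard : ∀ I ∈ G, #I = L := fun I hI => by
    by_contra h
    exact (mem_filter.1 hI).2 (dif_neg h)
  have hmeet : ∀ I ∈ G, ∀ c, ∃ v ∉ I, π v = c := fun I hI =>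
    exists_notMem_mk_eq_of_wedgeMinor_ne_zero (mem_filter.1 hI).2
  rcases G.eq_empty_or_nonempty with hG | ⟨I₀, hI₀⟩
  · rw [hG, card_empty, Nat.cast_zero]
    positivity
  -- `I₀ᶜ` meets every component, and `L` edges leave at least `N - L` of them
  have hK : Fintype.card (Quot (EdgeRel p)) = N - L := by
    refine le_antisymm ?_ ?_
    · calc Fintype.card (Quot (EdgeRel p)) ≤ #I₀ᶜ :=
            card_le_card_of_surjOn π fun c _ => by simpa using hmeet I₀ hI₀ c
        _ = N - L := by rw [card_compl, Fintype.card_fin, hcard I₀ hI₀]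
    · have := le_add_card_quot_edgeRel p
      rw [Nat.card_eq_fintype_card] at this
      omega
  have hG : #G ≤ ∏ c, #{v | π v = c} := by
    rw [← card_image_of_injective G compl_injective]
    refine card_le_prod_card_fiber_of_forall_transversal π _ fun J hJ => ?_
    obtain ⟨I, hI, rfl⟩ := mem_image.1 hJ
    refine ⟨by simp [card_compl, hcard I hI, hK], fun c => ?_⟩
    simpa using hmeet I hI c
  calc (#G : ℝ) ≤ ∏ c, (#{v | π v = c} : ℝ) := by exact_mod_cast hG
    _ ≤ ((∑ c, (#{v | π v = c} : ℝ)) / #(univ : Finset (Quot (EdgeRel p)))) ^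
          #(univ : Finset (Quot (EdgeRel p))) :=
        Real.prod_le_arith_mean_pow _ _ fun _ _ => by positivity
    _ = ((N : ℝ) / (N - L : ℕ)) ^ (N - L) := by
        rw [← Nat.cast_sum, ← card_eq_sum_card_fiberwise fun v _ => mem_univ (π v)]
        simp only [card_univ, hK, Fintype.card_fin]

theorem exists_eq_sum_smul_edgeVec (x : Fin N → ℝ) (hx : ∑ i, x i = 0) :
    ∃ γ : Fin N × Fin N → ℝ, x = ∑ t, γ t • edgeVec t ∧ ∑ t, |γ t| = (∑ i, |x i|) / 2 := by
  set δ := ∑ i, (x i)⁺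
  have hneg : ∑ i, (x i)⁻ = δ := by
    have : ∑ i, ((x i)⁺ - (x i)⁻) = 0 := by simpa [posPart_sub_negPart] using hx
    rw [sum_sub_distrib, sub_eq_zero] at this
    exact this.symm
  have hnorm : ∑ i, |x i| = 2 * δ := by
    simp_rw [← posPart_add_negPart]
    rw [sum_add_distrib, hneg]
    ring
  rcases eq_or_ne δ 0 with hδ | hδ
  · have hx0 : x = 0 := funext fun v => by
      have hp := (sum_eq_zero_iff_of_nonneg fun i _ => posPart_nonneg (x i)).1 hδ v (mem_univ v)
      have hn := (sum_eq_zero_iff_of_nonneg fun i _ => negPart_nonneg (x i)).1 (hneg.trans hδ) v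
        (mem_univ v)
      rw [← posPart_sub_negPart (x v), hp, hn, sub_zero, Pi.zero_apply]
    exact ⟨0, by simp [hx0], by simp [hx0]⟩
  -- split the positive mass `x⁺` over the negative mass `x⁻` proportionally
  refine ⟨fun t => (x t.1)⁺ * (x t.2)⁻ / δ, ?_, ?_⟩
  · ext v
    simp only [Finset.sum_apply, Pi.smul_apply, edgeVec, Pi.sub_apply, smul_eq_mul,
      Fintype.sum_prod_type, mul_sub, sum_sub_distrib, Pi.single_apply, mul_ite, mul_one, mul_zero,
      sum_ite_eq, sum_ite_irrel, sum_const_zero, mem_univ, if_true]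
    rw [← sum_div, ← mul_sum, hneg, mul_div_cancel_right₀ _ hδ, ← sum_div, ← sum_mul,
      mul_div_cancel_left₀ _ hδ, posPart_sub_negPart]
  · have hδpos : 0 < δ := lt_of_le_of_ne (sum_nonneg fun i _ => posPart_nonneg _) hδ.symm
    simp_rw [abs_of_nonneg
      (div_nonneg (mul_nonneg (posPart_nonneg _) (negPart_nonneg _)) hδpos.le)]
    rw [hnorm, Fintype.sum_prod_type]
    simp_rw [← sum_div, ← mul_sum, hneg, ← sum_mul]
    field_simp
    rfl

theorem wedgeL1_le_prod_sum_abs (x : Fin L → Fin N → ℝ) :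
    wedgeL1 x ≤ ∏ j, ∑ i, |x j i| := by
  have hx : x = fun j => ∑ v, x j v • Pi.single v (1 : ℝ) := funext fun j => pi_eq_sum_univ' (x j)
  calc wedgeL1 x ≤ 1 * ∏ j, ∑ i, |x j i| := by
        conv_lhs => rw [hx]
        exact wedgeL1_sum_smul_le _ x wedgeL1_single_le_one
    _ = ∏ j, ∑ i, |x j i| := one_mul _

theorem wedgeL1_le_of_sum_eq_zero (x : Fin L → Fin N → ℝ)
    (hx : ∀ j, ∑ i, x j i = 0) :
    wedgeL1 x ≤ ((N : ℝ) / (N - L : ℕ)) ^ (N - L) * ∏ j, (∑ i, |x j i|) / 2 := by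
  choose γ hγ hγsum using fun j => exists_eq_sum_smul_edgeVec (x j) (hx j)
  calc wedgeL1 x = wedgeL1 fun j => ∑ t, γ j t • edgeVec t := congrArg wedgeL1 (funext hγ)
    _ ≤ ((N : ℝ) / (N - L : ℕ)) ^ (N - L) * ∏ j, ∑ t, |γ j t| :=
        wedgeL1_sum_smul_le edgeVec γ fun f => wedgeL1_edgeVec_le f
    _ = ((N : ℝ) / (N - L : ℕ)) ^ (N - L) * ∏ j, (∑ i, |x j i|) / 2 := by simp_rw [hγsum]

theorem wedgeL1_le_min_of_sum_eq_zero (x : Fin L → Fin N → ℝ)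
    (hx : ∀ j, ∑ i, x j i = 0) :
    wedgeL1 x ≤
      (2 : ℝ)⁻¹ ^ L * min ((2 : ℝ) ^ L) (((N : ℝ) / (N - L : ℕ)) ^ (N - L)) *
        ∏ j, ∑ i, |x j i| := by
  rw [mul_min_of_nonneg _ _ (by positivity), min_mul_of_nonneg _ _ (by positivity)]
  refine le_min ?_ ?_
  · simpa [← mul_pow] using wedgeL1_le_prod_sum_abs x
  · refine (wedgeL1_le_of_sum_eq_zero x hx).trans_eq ?_
    simp only [div_eq_mul_inv _ (2 : ℝ), prod_mul_distrib, prod_const, card_univ, Fintype.card_fin]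
    ring

end Wedge

theorem stmt19_general (k : Type*) [Field k] (r q : ℕ) (hqr : q ≤ r)
    (V : Type*) [Fintype V] (hV : Fintype.card V = r + 1)
    (absv : V → AbsoluteValue k ℝ)
    (d : V → ℕ)
    (α : Fin q → kˣ)
    (hprod : ∀ j, ∏ v, absv v (α j : k) ^ d v = 1) :
    let A : Fin q → Fin (r + 1) → ℝ := fun j i =>
      (d ((Fintype.equivFinOfCardEq hV).symm i) : ℝ) *
        Real.log (absv ((Fintype.equivFinOfCardEq hV).symm i) (α j : k))
    wedgeL1 A ≤
      (2 : ℝ)⁻¹ ^ q *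
        min ((2 : ℝ) ^ q) ((((r : ℝ) + 1) / ((r : ℝ) + 1 - (q : ℝ))) ^ (r + 1 - q)) *
        ∏ j, ∑ i, |A j i| := by
  intro A
  have hA : ∀ j, ∑ i, A j i = 0 := fun j => by
    rw [(Fintype.equivFinOfCardEq hV).symm.sum_comp fun v => (d v : ℝ) * Real.log (absv v (α j))]
    exact Real.sum_mul_log_eq_zero_of_prod_pow_eq_one d
      (fun v => (absv v).ne_zero (α j).ne_zero) (hprod j)
  have hN : ((r + 1 : ℕ) : ℝ) / (r + 1 - q : ℕ) = ((r : ℝ) + 1) / ((r : ℝ) + 1 - q) := by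
    push_cast [Nat.cast_sub (show q ≤ r + 1 by omega)]
    ring
  simpa only [hN] using wedgeL1_le_min_of_sum_eq_zero A hA

/-- Akhtari–Vaaler: for multiplicatively independent `S`-units `α₁,…,α_q` of a number
field `k` (with `|S| = r + 1`, `1 ≤ q ≤ r`), the logarithmic embedding vectors
`α_j = (d_v log‖α_j‖_v)_{v ∈ S} ∈ ℝ^{r+1}` satisfy
`‖α₁ ∧ ⋯ ∧ α_q‖₁ ≤ 2^{−q} C(q,r) Π_j ‖α_j‖₁` with
`C(q,r) = min{2^q, ((r+1)/(r+1−q))^{r+1−q}}`.  The places `v ∈ S` are modelled by an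
injective family of absolute values on `k` with local degrees `d_v`; the `S`-unit
property and the product formula combine to `Π_{v∈S} ‖α_j‖_v^{d_v} = 1`. -/
theorem stmt19 (k : Type*) [Field k] [NumberField k] (r q : ℕ) (hq : 1 ≤ q) (hqr : q ≤ r)
    (V : Type*) [Fintype V] (hV : Fintype.card V = r + 1)
    (absv : V → AbsoluteValue k ℝ) (habs : Function.Injective absv)
    (d : V → ℕ) (hd : ∀ v, 1 ≤ d v)
    (α : Fin q → kˣ)
    (hprod : ∀ j, ∏ v, absv v (α j : k) ^ d v = 1)
    (hind : ∀ e : Fin q → ℤ, (∃ n : ℕ, 0 < n ∧ (∏ j, α j ^ e j) ^ n = 1) → e = 0) :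
    let A : Fin q → Fin (r + 1) → ℝ := fun j i =>
      (d ((Fintype.equivFinOfCardEq hV).symm i) : ℝ) *
        Real.log (absv ((Fintype.equivFinOfCardEq hV).symm i) (α j : k))
    wedgeL1 A ≤
      (2 : ℝ)⁻¹ ^ q *
        min ((2 : ℝ) ^ q) ((((r : ℝ) + 1) / ((r : ℝ) + 1 - (q : ℝ))) ^ (r + 1 - q)) *
        ∏ j, ∑ i, |A j i| :=
  stmt19_general k r q hqr V hV absv d α hprod
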